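/- For every MS4-frame F: (1) the skeleton F^t is an MIPC-frame; (2) for every valuation v on F there is a valuation v' on F^t (namely v'(p) = {[x] : R[x] ⊆ v(p)}) such that for every point x and every L∀∃-formula φ, F^t,[x] ⊨_{v'} φ iff F,x ⊨_v φ^t; (3) consequently F^t ⊨ φ iff F ⊨ φ^t for every L∀∃-formula φ; and (4) every MIPC-frame is isomorphic to F^t for some MS4-frame F. -/
import Mathlib


/-- Formulas of the monadic intuitionistic language `L∀∃`. -/
inductive MForm : Type
  | var : Nat → MForm
  | bot : MForm
  | and : MForm → MForm → MForm
  | or  : MForm → MForm → MForm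
  | imp : MForm → MForm → MForm
  | all : MForm → MForm
  | ex  : MForm → MForm

/-- Intuitionistic negation `¬φ := φ → ⊥`. -/
def MForm.neg (φ : MForm) : MForm := φ.imp MForm.bot

/-- Biconditional `φ ↔ ψ := (φ → ψ) ∧ (ψ → φ)`. -/
def MForm.iff (φ ψ : MForm) : MForm := (φ.imp ψ).and (ψ.imp φ)

/-- Formulas of the bimodal language `L□∀` with modalities `□` and `∀`. -/
inductive BForm : Type
  | var : Nat → BForm
  | bot : BForm
  | and : BForm → BForm → BForm
  | or  : BForm → BForm → BForm
  | imp : BForm → BForm → BForm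
  | box : BForm → BForm
  | all : BForm → BForm

def BForm.neg (φ : BForm) : BForm := φ.imp BForm.bot
def BForm.iff (φ ψ : BForm) : BForm := (φ.imp ψ).and (ψ.imp φ)
/-- `◇φ := ¬□¬φ`. -/
def BForm.dia (φ : BForm) : BForm := ((φ.neg).box).neg
/-- `∃φ := ¬∀¬φ`. -/
def BForm.ex (φ : BForm) : BForm := ((φ.neg).all).neg

/-- The Gödel translation `(−)^t : L∀∃ → L□∀`. -/
def godel : MForm → BForm
  | .var n => (BForm.var n).box
  | .bot => BForm.bot
  | .and φ ψ => (godel φ).and (godel ψ)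
  | .or φ ψ => (godel φ).or (godel ψ)
  | .imp φ ψ => (((godel φ).neg).or (godel ψ)).box
  | .all φ => ((godel φ).all).box
  | .ex φ => (godel φ).ex

/-- `(X,R,Q)` is an MIPC-frame: `R` is a partial order, `Q` a quasi-order,
`R ⊆ Q`, and `xQy` implies there is `z` with `xRz` and `z E_Q y`. -/
structure IsMIPCFrame {X : Type} (R Q : X → X → Prop) : Prop where
  rrefl : ∀ x, R x x
  rtrans : ∀ x y z, R x y → R y z → R x z
  rantisymm : ∀ x y, R x y → R y x → x = y
  qrefl : ∀ x, Q x x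
  qtrans : ∀ x y z, Q x y → Q y z → Q x z
  rsubq : ∀ x y, R x y → Q x y
  pass : ∀ x y, Q x y → ∃ z, R x z ∧ Q z y ∧ Q y z

/-- Satisfaction in an MIPC-frame: intuitionistic connectives are interpreted
via `R`, `∀` via `Q`-successors and `∃` via `E_Q`-related points. -/
def isat {X : Type} (R Q : X → X → Prop) (v : Nat → Set X) : MForm → X → Prop
  | .var n, x => x ∈ v n
  | .bot, _ => False
  | .and φ ψ, x => isat R Q v φ x ∧ isat R Q v ψ x
  | .or φ ψ, x => isat R Q v φ x ∨ isat R Q v ψ x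
  | .imp φ ψ, x => ∀ y, R x y → isat R Q v φ y → isat R Q v ψ y
  | .all φ, x => ∀ y, Q x y → isat R Q v φ y
  | .ex φ, x => ∃ y, (Q x y ∧ Q y x) ∧ isat R Q v φ y

/-- Validity in an MIPC-frame: truth at every point under every valuation
assigning `R`-upsets to the propositional letters. -/
def iValid {X : Type} (R Q : X → X → Prop) (φ : MForm) : Prop :=
  ∀ v : Nat → Set X, (∀ n x y, R x y → x ∈ v n → y ∈ v n) → ∀ x, isat R Q v φ x

/-- `(X,R,E)` is an MS4-frame: `R` is a quasi-order, `E` an equivalence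
relation, and `xEy`, `yRz` imply there is `u` with `xRu` and `uEz`. -/
structure IsMS4Frame {X : Type} (R E : X → X → Prop) : Prop where
  rrefl : ∀ x, R x x
  rtrans : ∀ x y z, R x y → R y z → R x z
  eqv : Equivalence E
  comm : ∀ x y z, E x y → R y z → ∃ u, R x u ∧ E u z

/-- Satisfaction in an MS4-frame: `□` is interpreted via `R`-successors and
`∀` via `E`-related points. -/
def msat {X : Type} (R E : X → X → Prop) (v : Nat → Set X) : BForm → X → Prop
  | .var n, x => x ∈ v n
  | .bot, _ => False
  | .and φ ψ, x => msat R E v φ x ∧ msat R E v ψ x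
  | .or φ ψ, x => msat R E v φ x ∨ msat R E v ψ x
  | .imp φ ψ, x => msat R E v φ x → msat R E v ψ x
  | .box φ, x => ∀ y, R x y → msat R E v φ y
  | .all φ, x => ∀ y, E x y → msat R E v φ y

/-- Validity in an MS4-frame. -/
def mValid {X : Type} (R E : X → X → Prop) (φ : BForm) : Prop :=
  ∀ (v : Nat → Set X) (x : X), msat R E v φ x

/-- The setoid `x ∼ y iff xRy and yRx` associated with a quasi-order `R`. -/
def skelSetoid {X : Type} (R : X → X → Prop) (hr : ∀ x, R x x)
    (ht : ∀ x y z, R x y → R y z → R x z) : Setoid X :=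
  ⟨fun x y => R x y ∧ R y x,
   ⟨fun x => ⟨hr x, hr x⟩, fun h => ⟨h.2, h.1⟩,
    fun h1 h2 => ⟨ht _ _ _ h1.1 h2.1, ht _ _ _ h2.2 h1.2⟩⟩⟩

/-- The relation on the skeleton induced by a relation `S` on `X`:
`[x] S' [y] iff x S y`. -/
def liftRel {X : Type} (R : X → X → Prop) (hr : ∀ x, R x x)
    (ht : ∀ x y z, R x y → R y z → R x z) (S : X → X → Prop) :
    Quotient (skelSetoid R hr ht) → Quotient (skelSetoid R hr ht) → Prop :=
  fun a b => ∃ x y, Quotient.mk (skelSetoid R hr ht) x = a ∧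
    Quotient.mk (skelSetoid R hr ht) y = b ∧ S x y

/-- The valuation `v'` on the skeleton given by `v'(p) = {[x] : R[x] ⊆ v(p)}`. -/
def skelVal {X : Type} (R : X → X → Prop) (hr : ∀ x, R x x)
    (ht : ∀ x y z, R x y → R y z → R x z) (v : Nat → Set X) :
    Nat → Set (Quotient (skelSetoid R hr ht)) :=
  fun n => {a | ∃ x, Quotient.mk (skelSetoid R hr ht) x = a ∧ ∀ y, R x y → y ∈ v n}

/-- The relation `Q_E`: `x Q_E y` iff there is `z` with `xRz` and `zEy`. -/
def QE {X : Type} (R E : X → X → Prop) : X → X → Prop :=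
  fun x y => ∃ z, R x z ∧ E z y

namespace MS4Aux

open Classical

variable {X : Type} {R E : X → X → Prop}

theorem liftR_iff (h : IsMS4Frame R E) (x y : X) :
    liftRel R h.rrefl h.rtrans R (Quotient.mk (skelSetoid R h.rrefl h.rtrans) x)
      (Quotient.mk (skelSetoid R h.rrefl h.rtrans) y) ↔ R x y := by
  constructor
  · rintro ⟨x', y', hx, hy, hr⟩
    obtain ⟨hx1, hx2⟩ := Quotient.exact hx
    obtain ⟨hy1, hy2⟩ := Quotient.exact hy
    exact h.rtrans _ _ _ hx2 (h.rtrans _ _ _ hr hy1)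
  · intro hr; exact ⟨x, y, rfl, rfl, hr⟩

theorem qe_refl (h : IsMS4Frame R E) (x : X) : QE R E x x :=
  ⟨x, h.rrefl x, h.eqv.refl x⟩

theorem qe_rtrans (h : IsMS4Frame R E) {x y z : X} (hxy : R x y) (hyz : QE R E y z) :
    QE R E x z := by
  obtain ⟨u, hu1, hu2⟩ := hyz
  exact ⟨u, h.rtrans _ _ _ hxy hu1, hu2⟩

theorem qe_etrans (h : IsMS4Frame R E) {x y z : X} (hxy : QE R E x y) (hyz : E y z) :
    QE R E x z := by
  obtain ⟨u, hu1, hu2⟩ := hxy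
  exact ⟨u, hu1, h.eqv.trans hu2 hyz⟩

theorem qe_trans (h : IsMS4Frame R E) {x y z : X} (hxy : QE R E x y) (hyz : QE R E y z) :
    QE R E x z := by
  obtain ⟨u, hu1, hu2⟩ := hxy
  obtain ⟨w, hw1, hw2⟩ := hyz
  obtain ⟨t, ht1, ht2⟩ := h.comm u y w hu2 hw1
  exact ⟨t, h.rtrans _ _ _ hu1 ht1, h.eqv.trans ht2 hw2⟩

theorem qe_rtrans_right (h : IsMS4Frame R E) {x y z : X} (hxy : QE R E x y) (hyz : R y z) :
    QE R E x z := by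
  obtain ⟨u, hu1, hu2⟩ := hxy
  obtain ⟨t, ht1, ht2⟩ := h.comm u y z hu2 hyz
  exact ⟨t, h.rtrans _ _ _ hu1 ht1, ht2⟩

theorem liftQ_iff (h : IsMS4Frame R E) (x y : X) :
    liftRel R h.rrefl h.rtrans (QE R E) (Quotient.mk (skelSetoid R h.rrefl h.rtrans) x)
      (Quotient.mk (skelSetoid R h.rrefl h.rtrans) y) ↔ QE R E x y := by
  constructor
  · rintro ⟨x', y', hx, hy, hq⟩
    obtain ⟨hx1, hx2⟩ := Quotient.exact hx
    obtain ⟨hy1, hy2⟩ := Quotient.exact hy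
    exact qe_rtrans_right h (qe_rtrans h hx2 hq) hy1
  · intro hq; exact ⟨x, y, rfl, rfl, hq⟩

/-- Truth of Gödel-translated formulas is monotone along `R`. -/
theorem mono (h : IsMS4Frame R E) (v : Nat → Set X) :
    ∀ (φ : MForm) (x y : X), R x y → msat R E v (godel φ) x → msat R E v (godel φ) y := by
  intro φ
  induction φ with
  | var n =>
    intro x y hxy hx z hz
    exact hx z (h.rtrans _ _ _ hxy hz)
  | bot => intro x y _ hx; exact hx.elim
  | and φ ψ ihφ ihψ =>
    intro x y hxy hx
    exact ⟨ihφ x y hxy hx.1, ihψ x y hxy hx.2⟩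
  | or φ ψ ihφ ihψ =>
    intro x y hxy hx
    exact hx.elim (fun hp => Or.inl (ihφ x y hxy hp)) (fun hp => Or.inr (ihψ x y hxy hp))
  | imp φ ψ _ _ =>
    intro x y hxy hx z hz
    exact hx z (h.rtrans _ _ _ hxy hz)
  | all φ _ =>
    intro x y hxy hx z hz
    exact hx z (h.rtrans _ _ _ hxy hz)
  | ex φ ihφ =>
    intro x y hxy hx H
    apply hx
    intro z hxz hz
    obtain ⟨u, hu1, hu2⟩ := h.comm z x y (h.eqv.symm hxz) hxy
    exact H u (h.eqv.symm hu2) (ihφ z u hu1 hz)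

/-- The key correspondence: `[x] ⊨ φ` in the skeleton iff `x ⊨ φ^t`. -/
theorem main (h : IsMS4Frame R E) (v : Nat → Set X) (φ : MForm) : ∀ x : X,
    isat (liftRel R h.rrefl h.rtrans R) (liftRel R h.rrefl h.rtrans (QE R E))
        (skelVal R h.rrefl h.rtrans v) φ (Quotient.mk (skelSetoid R h.rrefl h.rtrans) x) ↔
      msat R E v (godel φ) x := by
  induction φ with
  | var n =>
    intro x
    constructor
    · rintro ⟨x', hx', hv⟩
      intro y hxy
      obtain ⟨hx1, hx2⟩ := Quotient.exact hx'
      exact hv y (h.rtrans _ _ _ hx1 hxy)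
    · intro hv
      exact ⟨x, rfl, hv⟩
  | bot => intro x; exact Iff.rfl
  | and φ ψ ihφ ihψ =>
    intro x
    exact and_congr (ihφ x) (ihψ x)
  | or φ ψ ihφ ihψ =>
    intro x
    exact or_congr (ihφ x) (ihψ x)
  | imp φ ψ ihφ ihψ =>
    intro x
    constructor
    · intro H y hxy
      by_cases hp : msat R E v (godel φ) y
      · exact Or.inr ((ihψ y).1 (H _ ((liftR_iff h x y).2 hxy) ((ihφ y).2 hp)))
      · exact Or.inl fun hp' => hp hp'
    · intro H b hb hφb
      induction b using Quotient.ind with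
      | _ y =>
        have hxy : R x y := (liftR_iff h x y).1 hb
        rcases H y hxy with hl | hr
        · exact ((hl ((ihφ y).1 hφb)).elim : isat _ _ _ ψ _)
        · exact (ihψ y).2 hr
  | all φ ihφ =>
    intro x
    constructor
    · intro H y hxy z hyz
      exact (ihφ z).1 (H _ ((liftQ_iff h x z).2 ⟨y, hxy, hyz⟩))
    · intro H b hb
      induction b using Quotient.ind with
      | _ z =>
        obtain ⟨y, hxy, hyz⟩ := (liftQ_iff h x z).1 hb
        exact (ihφ z).2 (H y hxy z hyz)
  | ex φ ihφ =>
    intro x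
    constructor
    · rintro ⟨b, ⟨hq1, hq2⟩, hb⟩
      induction b using Quotient.ind with
      | _ z =>
        obtain ⟨w, hzw, hwx⟩ := (liftQ_iff h z x).1 hq2
        intro H
        exact H w (h.eqv.symm hwx) (mono h v φ z w hzw ((ihφ z).1 hb))
    · intro H
      by_cases hex : ∃ y, E x y ∧ msat R E v (godel φ) y
      · obtain ⟨y, hxy, hy⟩ := hex
        refine ⟨Quotient.mk (skelSetoid R h.rrefl h.rtrans) y,
          ⟨(liftQ_iff h x y).2 ⟨x, h.rrefl x, hxy⟩,
           (liftQ_iff h y x).2 ⟨y, h.rrefl y, h.eqv.symm hxy⟩⟩, (ihφ y).2 hy⟩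
      · exact absurd (fun y hxy hy => hex ⟨y, hxy, hy⟩) H

theorem skelVal_upset (h : IsMS4Frame R E) (v : Nat → Set X) (n : Nat)
    (a b : Quotient (skelSetoid R h.rrefl h.rtrans))
    (hab : liftRel R h.rrefl h.rtrans R a b)
    (ha : a ∈ skelVal R h.rrefl h.rtrans v n) : b ∈ skelVal R h.rrefl h.rtrans v n := by
  induction a using Quotient.ind with
  | _ x =>
  induction b using Quotient.ind with
  | _ y =>
    obtain ⟨x', hx', hv⟩ := ha
    obtain ⟨hx1, hx2⟩ := Quotient.exact hx'
    have hxy := (liftR_iff h x y).1 hab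
    exact ⟨y, rfl, fun z hyz => hv z (h.rtrans _ _ _ hx1 (h.rtrans _ _ _ hxy hyz))⟩

theorem skelVal_eq (h : IsMS4Frame R E)
    (v' : Nat → Set (Quotient (skelSetoid R h.rrefl h.rtrans)))
    (hup : ∀ (n : Nat) (a b : Quotient (skelSetoid R h.rrefl h.rtrans)),
      liftRel R h.rrefl h.rtrans R a b → a ∈ v' n → b ∈ v' n) :
    skelVal R h.rrefl h.rtrans
        (fun n => {x | Quotient.mk (skelSetoid R h.rrefl h.rtrans) x ∈ v' n}) = v' := by
  funext n
  ext a
  induction a using Quotient.ind with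
  | _ x =>
    constructor
    · rintro ⟨x', hx', hv⟩
      rw [← hx']
      exact hv x' (h.rrefl x')
    · intro hx
      exact ⟨x, rfl, fun y hxy => hup n _ _ ((liftR_iff h x y).2 hxy) hx⟩

end MS4Aux

open MS4Aux in
/-- For every MS4-frame `(X,R,E)`: (1) the skeleton
`(X',R',Q')` is an MIPC-frame; (2) for every valuation `v` on the frame, the
valuation `v'(p) = {[x] : R[x] ⊆ v(p)}` on the skeleton assigns `R'`-upsets and
satisfies `F^t,[x] ⊨_{v'} φ` iff `F,x ⊨_v φ^t`; (3) consequently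
`F^t ⊨ φ` iff `F ⊨ φ^t`; (4) every MIPC-frame is isomorphic to the skeleton of
some MS4-frame. -/
theorem ms4_skeleton (X : Type) (R E : X → X → Prop) (h : IsMS4Frame R E) :
    let R' := liftRel R h.rrefl h.rtrans R
    let Q' := liftRel R h.rrefl h.rtrans (QE R E)
    IsMIPCFrame R' Q' ∧
    (∀ v : Nat → Set X,
      (∀ (n : Nat) (a b : Quotient (skelSetoid R h.rrefl h.rtrans)),
          R' a b → a ∈ skelVal R h.rrefl h.rtrans v n →
            b ∈ skelVal R h.rrefl h.rtrans v n) ∧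
      (∀ (x : X) (φ : MForm),
          isat R' Q' (skelVal R h.rrefl h.rtrans v) φ
              (Quotient.mk (skelSetoid R h.rrefl h.rtrans) x) ↔
            msat R E v (godel φ) x)) ∧
    (∀ φ : MForm, iValid R' Q' φ ↔ mValid R E (godel φ)) ∧
    (∀ (Y : Type) (R₀ Q₀ : Y → Y → Prop), IsMIPCFrame R₀ Q₀ →
      ∃ (Z : Type) (R₁ E₁ : Z → Z → Prop) (h₁ : IsMS4Frame R₁ E₁)
        (f : Y ≃ Quotient (skelSetoid R₁ h₁.rrefl h₁.rtrans)),
        (∀ a b : Y, R₀ a b ↔ liftRel R₁ h₁.rrefl h₁.rtrans R₁ (f a) (f b)) ∧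
        (∀ a b : Y, Q₀ a b ↔ liftRel R₁ h₁.rrefl h₁.rtrans (QE R₁ E₁) (f a) (f b))) := by
  intro R' Q'
  refine ⟨?_, ?_, ?_, ?_⟩
  · -- (1) the skeleton is an MIPC-frame
    constructor
    · intro a; induction a using Quotient.ind with
      | _ x => exact (liftR_iff h x x).2 (h.rrefl x)
    · intro a b c hab hbc
      induction a using Quotient.ind with
      | _ x =>
      induction b using Quotient.ind with
      | _ y =>
      induction c using Quotient.ind with
      | _ z =>
        exact (liftR_iff h x z).2
          (h.rtrans _ _ _ ((liftR_iff h x y).1 hab) ((liftR_iff h y z).1 hbc))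
    · intro a b hab hba
      induction a using Quotient.ind with
      | _ x =>
      induction b using Quotient.ind with
      | _ y =>
        exact Quotient.sound ⟨(liftR_iff h x y).1 hab, (liftR_iff h y x).1 hba⟩
    · intro a; induction a using Quotient.ind with
      | _ x => exact (liftQ_iff h x x).2 (qe_refl h x)
    · intro a b c hab hbc
      induction a using Quotient.ind with
      | _ x =>
      induction b using Quotient.ind with
      | _ y =>
      induction c using Quotient.ind with
      | _ z =>
        exact (liftQ_iff h x z).2
          (qe_trans h ((liftQ_iff h x y).1 hab) ((liftQ_iff h y z).1 hbc))
    · intro a b hab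
      induction a using Quotient.ind with
      | _ x =>
      induction b using Quotient.ind with
      | _ y =>
        exact (liftQ_iff h x y).2 ⟨y, (liftR_iff h x y).1 hab, h.eqv.refl y⟩
    · intro a b hab
      induction a using Quotient.ind with
      | _ x =>
      induction b using Quotient.ind with
      | _ y =>
        obtain ⟨z, hxz, hzy⟩ := (liftQ_iff h x y).1 hab
        exact ⟨Quotient.mk (skelSetoid R h.rrefl h.rtrans) z,
          (liftR_iff h x z).2 hxz,
          (liftQ_iff h z y).2 ⟨z, h.rrefl z, hzy⟩,
          (liftQ_iff h y z).2 ⟨y, h.rrefl y, h.eqv.symm hzy⟩⟩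
  · -- (2) the valuation `v'` works
    intro v
    exact ⟨fun n a b hab ha => skelVal_upset h v n a b hab ha,
      fun x φ => main h v φ x⟩
  · -- (3) validity correspondence
    intro φ
    constructor
    · intro hi v x
      exact (main h v φ x).1
        (hi (skelVal R h.rrefl h.rtrans v) (fun n a b hab ha => skelVal_upset h v n a b hab ha)
          (Quotient.mk (skelSetoid R h.rrefl h.rtrans) x))
    · intro hm v' hup a
      induction a using Quotient.ind with
      | _ x =>
        have hmain := main h (fun n => {x | Quotient.mk (skelSetoid R h.rrefl h.rtrans) x ∈ v' n}) φ x
        rw [skelVal_eq h v' hup] at hmain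
        exact hmain.2 (hm _ x)
  · -- (4) every MIPC-frame is a skeleton
    intro Y R₀ Q₀ hm
    have h₁ : IsMS4Frame R₀ (fun a b => Q₀ a b ∧ Q₀ b a) := by
      refine ⟨hm.rrefl, hm.rtrans, ⟨fun x => ⟨hm.qrefl x, hm.qrefl x⟩,
        fun hab => ⟨hab.2, hab.1⟩,
        fun hab hbc => ⟨hm.qtrans _ _ _ hab.1 hbc.1, hm.qtrans _ _ _ hbc.2 hab.2⟩⟩, ?_⟩
      intro x y z hxy hyz
      obtain ⟨u, hu1, hu2, hu3⟩ := hm.pass x z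
        (hm.qtrans _ _ _ hxy.1 (hm.rsubq _ _ hyz))
      exact ⟨u, hu1, hu2, hu3⟩
    refine ⟨Y, R₀, (fun a b => Q₀ a b ∧ Q₀ b a), h₁,
      ⟨Quotient.mk (skelSetoid R₀ h₁.rrefl h₁.rtrans),
       Quotient.lift id (fun a b hab => hm.rantisymm a b hab.1 hab.2),
       fun a => rfl,
       fun q => by induction q using Quotient.ind with | _ a => rfl⟩, ?_, ?_⟩
    · intro a b
      exact (liftR_iff h₁ a b).symm
    · intro a b
      rw [show (QE R₀ fun a b => Q₀ a b ∧ Q₀ b a) = QE R₀ (fun a b => Q₀ a b ∧ Q₀ b a) from rfl]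
      constructor
      · intro hq
        refine (liftQ_iff h₁ a b).2 ?_
        obtain ⟨z, hz1, hz2, hz3⟩ := hm.pass a b hq
        exact ⟨z, hz1, hz2, hz3⟩
      · intro hq
        obtain ⟨z, hz1, hz2⟩ := (liftQ_iff h₁ a b).1 hq
        exact hm.qtrans _ _ _ (hm.rsubq _ _ hz1) hz2.1
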